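/- arXiv:1712.09202 — 3 statements merged into one kernel-verified Lean document; each statement's English description precedes it below -/
import Mathlib

section
/- For a ∈ ℂ and a finitely supported family Ω = (μ_k)_{k∈ℤ} of complex numbers, the bilinear map Υ^a_Ω on W(a,1) defined by Υ^a_Ω(L_m, L_n) = Σ_k (m+n+k+a)·μ_k·I_{m+n+k} and Υ^a_Ω(L_m, I_n) = Υ^a_Ω(I_n, L_m) = Υ^a_Ω(I_m, I_n) = 0 is a symmetric biderivation of W(a,1). -/
/-- `f` is a biderivation: a derivation in each argument. -/
def IsBiderivation {W : Type*} [LieRing W] (f : W → W → W) : Prop :=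
  (∀ x y z : W, f ⁅x, y⁆ z = ⁅x, f y z⁆ + ⁅f x z, y⁆) ∧
  (∀ x y z : W, f x ⁅y, z⁆ = ⁅f x y, z⁆ + ⁅y, f x z⁆)

/-- A model of the Lie algebra `W(a,b)`: a complex Lie algebra with a basis
`{L m, I m | m : ℤ}` satisfying the defining bracket relations. -/
structure IsWab (a b : ℂ) (W : Type*) [LieRing W] [LieAlgebra ℂ W]
    (L I : ℤ → W) : Prop where
  bracket_LL : ∀ m n : ℤ, ⁅L m, L n⁆ = ((m - n : ℤ) : ℂ) • L (m + n)
  bracket_LI : ∀ m n : ℤ, ⁅L m, I n⁆ = (-((n : ℂ) + a + b * (m : ℂ))) • I (m + n)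
  bracket_II : ∀ m n : ℤ, ⁅I m, I n⁆ = 0
  basis : ∃ B : Module.Basis (ℤ ⊕ ℤ) ℂ W,
    (∀ m : ℤ, B (Sum.inl m) = L m) ∧ (∀ m : ℤ, B (Sum.inr m) = I m)

/-! All identities involved are multilinear, so it suffices to check them on basis vectors.
`Υ` vanishes as soon as an `I` is involved and the `I`'s commute, so symmetry and the Leibniz rule
in the second argument reduce to the triple `(L m, L n, L p)`; with `s = m + k + a` the coefficient
of `μ_k I_{m+n+p+k}` there is `(s+n)(s+n+p) - (s+p)(s+p+n) = (n-p)(s+n+p)`. The Leibniz rule in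
the first argument then follows from the one in the second by symmetry. -/

namespace Module.Basis

variable {R W ι : Type*} [CommRing R] [LieRing W] [LieAlgebra R W] (b : Basis ι R W)

theorem lie_leibniz_of_basis (D : W →ₗ[R] W)
    (h : ∀ i j, D ⁅b i, b j⁆ = ⁅D (b i), b j⁆ + ⁅b i, D (b j)⁆) (y z : W) :
    D ⁅y, z⁆ = ⁅D y, z⁆ + ⁅y, D z⁆ := by
  have key : (LieAlgebra.ad R W : W →ₗ[R] W →ₗ[R] W).compr₂ D =
      (LieAlgebra.ad R W : W →ₗ[R] W →ₗ[R] W) ∘ₗ D +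
        (LieAlgebra.ad R W : W →ₗ[R] W →ₗ[R] W).compl₂ D :=
    b.ext fun i => b.ext fun j => by simpa using h i j
  simpa using LinearMap.congr_fun₂ key y z

theorem apply_comm_of_basis (f : W →ₗ[R] W →ₗ[R] W)
    (h : ∀ i j, f (b i) (b j) = f (b j) (b i)) (x y : W) : f x y = f y x :=
  LinearMap.congr_fun₂ (b.ext fun i => b.ext fun j => h i j : f = f.flip) x y

theorem lie_leibniz_right_of_basis (f : W →ₗ[R] W →ₗ[R] W)
    (h : ∀ i j k, f (b i) ⁅b j, b k⁆ = ⁅f (b i) (b j), b k⁆ + ⁅b j, f (b i) (b k)⁆)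
    (x y z : W) : f x ⁅y, z⁆ = ⁅f x y, z⁆ + ⁅y, f x z⁆ := by
  refine Submodule.span_induction (fun _ ⟨i, hi⟩ => hi ▸ b.lie_leibniz_of_basis _ (h i) y z)
    (by simp) (fun x x' _ _ hx hx' => ?_) (fun c x _ hx => ?_) (b.mem_span x)
  · simp only [map_add, LinearMap.add_apply, hx, hx', add_lie, lie_add]
    abel
  · simp [hx, smul_add]

end Module.Basis

theorem isBiderivation_of_comm {W : Type*} [LieRing W] (f : W → W → W)
    (hcomm : ∀ x y, f x y = f y x) (hright : ∀ x y z, f x ⁅y, z⁆ = ⁅f x y, z⁆ + ⁅y, f x z⁆) :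
    IsBiderivation f := by
  refine ⟨fun x y z => ?_, hright⟩
  rw [hcomm, hright, hcomm z x, hcomm z y, add_comm]

/-- `Υ^a_Ω (L m) (L n)`, which depends only on `q = m + n`. -/
def upsilonLL (a : ℂ) (Ω : ℤ →₀ ℂ) {W : Type*} [AddCommMonoid W] [Module ℂ W] (I : ℤ → W)
    (q : ℤ) : W :=
  Ω.sum fun k c => ((((q + k : ℤ) : ℂ) + a) * c) • I (q + k)

namespace IsWab

variable {a b : ℂ} {W : Type*} [LieRing W] [LieAlgebra ℂ W] {L I : ℤ → W}

theorem lie_I_L (hW : IsWab a b W L I) (m n : ℤ) :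
    ⁅I n, L m⁆ = ((n : ℂ) + a + b * m) • I (m + n) := by
  rw [← lie_skew, hW.bracket_LI, neg_smul, neg_neg]

theorem upsilonLL_lie_I (hW : IsWab a b W L I) (Ω : ℤ →₀ ℂ) (q p : ℤ) :
    ⁅upsilonLL a Ω I q, I p⁆ = 0 := by
  simp [upsilonLL, Finsupp.sum, sum_lie, hW.bracket_II]

theorem I_lie_upsilonLL (hW : IsWab a b W L I) (Ω : ℤ →₀ ℂ) (q p : ℤ) :
    ⁅I p, upsilonLL a Ω I q⁆ = 0 := by
  rw [← lie_skew, hW.upsilonLL_lie_I, neg_zero]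

theorem upsilonLL_leibniz (hW : IsWab a 1 W L I) (Ω : ℤ →₀ ℂ) (q n p : ℤ) :
    ((n - p : ℤ) : ℂ) • upsilonLL a Ω I (q + n + p) =
      ⁅upsilonLL a Ω I (q + n), L p⁆ + ⁅L n, upsilonLL a Ω I (q + p)⁆ := by
  simp only [upsilonLL, Finsupp.sum, Finset.smul_sum, sum_lie, lie_sum,
    ← Finset.sum_add_distrib, smul_lie, lie_smul, hW.lie_I_L, hW.bracket_LI, smul_smul]
  refine Finset.sum_congr rfl fun k _ => ?_
  rw [show p + (q + n + k) = q + n + p + k by ring, show n + (q + p + k) = q + n + p + k by ring,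
    ← add_smul]
  congr 1
  push_cast
  ring

end IsWab

/-- The map `Υ^a_Ω` (given on the basis by
`Υ^a_Ω(L m, L n) = Σ_k (m+n+k+a) μ_k I (m+n+k)` and zero on other basis pairs)
is a symmetric biderivation of `W(a,1)`. -/
theorem upsilon_symmetric_biderivation (a : ℂ) (Ω : ℤ →₀ ℂ) {W : Type*}
    [LieRing W] [LieAlgebra ℂ W] (L I : ℤ → W) (hW : IsWab a 1 W L I)
    (f : W →ₗ[ℂ] W →ₗ[ℂ] W)
    (hLL : ∀ m n : ℤ, f (L m) (L n) =
      Ω.sum fun k c => ((((m + n + k : ℤ) : ℂ) + a) * c) • I (m + n + k))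
    (hLI : ∀ m n : ℤ, f (L m) (I n) = 0)
    (hIL : ∀ m n : ℤ, f (I n) (L m) = 0)
    (hII : ∀ m n : ℤ, f (I m) (I n) = 0) :
    (∀ x y : W, f x y = f y x) ∧ IsBiderivation (fun x y => f x y) := by
  obtain ⟨B, hBL, hBI⟩ := hW.basis
  replace hLL : ∀ m n, f (L m) (L n) = upsilonLL a Ω I (m + n) := hLL
  have hI : ∀ m, f (I m) = 0 := fun m => B.ext fun
    | .inl n => by rw [hBL, hIL, LinearMap.zero_apply]
    | .inr n => by rw [hBI, hII, LinearMap.zero_apply]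
  have hcomm : ∀ x y, f x y = f y x := B.apply_comm_of_basis f <| by
    rintro (m | m) (n | n) <;> simp only [hBL, hBI, hLL, hLI, hIL, hII, add_comm]
  refine ⟨hcomm, isBiderivation_of_comm _ hcomm (B.lie_leibniz_right_of_basis f ?_)⟩
  rintro (m | m) (n | n) (p | p) <;>
    simp only [hBL, hBI, hI, hW.bracket_LL, hW.bracket_LI, hW.bracket_II, hW.lie_I_L, hLL, hLI,
      map_smul, map_zero, LinearMap.zero_apply, hW.upsilonLL_lie_I, hW.I_lie_upsilonLL,
      smul_zero, lie_zero, zero_lie, add_zero]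
  rw [← add_assoc]
  exact hW.upsilonLL_leibniz Ω m n p
end

section
/- On W(0,0), the maps D₂^{0,0} (defined by D₂^{0,0}(L_m) = (m−1)I_m, D₂^{0,0}(I_m) = 0) and D₃ (defined by D₃(L_m) = m·I_m, D₃(I_m) = 0) are derivations of the Lie algebra W(0,0). -/
/-!
A derivation is determined by the Leibniz rule on basis pairs, since the defect
`D ⁅x, y⁆ - ⁅D x, y⁆ - ⁅x, D y⁆` is bilinear. For a map `L m ↦ c m • I m`, `I m ↦ 0` on `W(a,b)`
the `I`-`I` and `L`-`I` pairs are automatic because the `I m` span an abelian ideal, and the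
`L`-`L` pair is the cocycle condition `(m - n) c(m+n) = c(m) (m + a + b n) - c(n) (n + a + b m)`,
which for `a = b = 0` holds for `c m = m - 1` and `c m = m`.
-/

theorem Module.Basis.leibniz_of_leibniz_basis {R L ι : Type*} [CommRing R] [LieRing L]
    [LieAlgebra R L] (B : Module.Basis ι R L) (D : L →ₗ[R] L)
    (h : ∀ i j, D ⁅B i, B j⁆ = ⁅D (B i), B j⁆ + ⁅B i, D (B j)⁆) (x y : L) :
    D ⁅x, y⁆ = ⁅D x, y⁆ + ⁅x, D y⁆ := by
  let defect : L →ₗ[R] L →ₗ[R] L := LinearMap.mk₂ R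
    (fun x y => D ⁅x, y⁆ - ⁅D x, y⁆ - ⁅x, D y⁆)
    (fun _ _ _ => by simp only [add_lie, map_add]; abel)
    (fun _ _ _ => by simp only [smul_lie, map_smul, smul_sub])
    (fun _ _ _ => by simp only [lie_add, map_add]; abel)
    (fun _ _ _ => by simp only [lie_smul, map_smul, smul_sub])
  have defect_eq_zero : defect = 0 :=
    B.ext fun i => B.ext fun j => by
      simp only [defect, LinearMap.mk₂_apply, LinearMap.zero_apply, h, sub_sub, sub_self]
  have := LinearMap.congr_fun₂ defect_eq_zero x y
  rwa [LinearMap.zero_apply, LinearMap.zero_apply, LinearMap.mk₂_apply, sub_sub,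
    sub_eq_zero] at this

namespace IsWab

variable {a b : ℂ} {W : Type*} [LieRing W] [LieAlgebra ℂ W] {L I : ℤ → W}

theorem bracket_IL (hW : IsWab a b W L I) (m n : ℤ) :
    ⁅I m, L n⁆ = ((m : ℂ) + a + b * n) • I (n + m) := by
  rw [← lie_skew, hW.bracket_LI, neg_smul, neg_neg]

theorem leibniz_of_map_L_eq_smul_I (hW : IsWab a b W L I) (D : W →ₗ[ℂ] W) (c : ℤ → ℂ)
    (hL : ∀ m, D (L m) = c m • I m) (hI : ∀ m, D (I m) = 0)
    (hc : ∀ m n : ℤ, ((m : ℂ) - n) * c (m + n) = c m * (m + a + b * n) - c n * (n + a + b * m))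
    (x y : W) : D ⁅x, y⁆ = ⁅D x, y⁆ + ⁅x, D y⁆ := by
  obtain ⟨B, hBL, hBI⟩ := hW.basis
  refine B.leibniz_of_leibniz_basis D (fun i j => ?_) x y
  rcases i with m | m <;> rcases j with n | n <;> simp only [hBL, hBI]
  · rw [hW.bracket_LL, map_smul, hL, hL, hL, smul_lie, lie_smul, hW.bracket_IL,
      hW.bracket_LI, add_comm n m]
    match_scalars
    linear_combination hc m n
  · rw [hW.bracket_LI, map_smul, hI, hL, hI, smul_lie, hW.bracket_II, lie_zero, smul_zero,
      smul_zero, add_zero]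
  · rw [← lie_skew, hW.bracket_LI, map_neg, map_smul, hI, hL, hI, lie_smul, hW.bracket_II,
      zero_lie, smul_zero, smul_zero, neg_zero, add_zero]
  · rw [hW.bracket_II, hI, hI, map_zero, zero_lie, lie_zero, add_zero]

end IsWab

/-- `D₂^{0,0}` and `D₃` are derivations of `W(0,0)`. -/
theorem derivations_W00 {W : Type*} [LieRing W] [LieAlgebra ℂ W]
    (L I : ℤ → W) (hW : IsWab 0 0 W L I) (D2 D3 : W →ₗ[ℂ] W)
    (hD2L : ∀ m : ℤ, D2 (L m) = ((m - 1 : ℤ) : ℂ) • I m)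
    (hD2I : ∀ m : ℤ, D2 (I m) = 0)
    (hD3L : ∀ m : ℤ, D3 (L m) = (m : ℂ) • I m)
    (hD3I : ∀ m : ℤ, D3 (I m) = 0) :
    (∀ x y : W, D2 ⁅x, y⁆ = ⁅D2 x, y⁆ + ⁅x, D2 y⁆) ∧
    (∀ x y : W, D3 ⁅x, y⁆ = ⁅D3 x, y⁆ + ⁅x, D3 y⁆) :=
  ⟨hW.leibniz_of_map_L_eq_smul_I D2 _ hD2L hD2I fun m n => by push_cast; ring,
    hW.leibniz_of_map_L_eq_smul_I D3 _ hD3L hD3I fun m n => by push_cast; ring⟩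
end

section
/- Every symmetric biderivation of W(0,1) is of the form Υ^0_Ω for some finitely supported family Ω = (μ_k)_{k∈ℤ} of complex numbers; i.e., f(L_m, L_n) = Σ_k (m+n+k)·μ_k·I_{m+n+k}, f(L_m, I_n) = f(I_n, L_m) = f(I_m, I_n) = 0 for all m,n ∈ ℤ. -/
section Recurrences

variable {K : Type*} [Field K] [CharZero K]

theorem exists_eq_mul_sub_of_witt_derivation {d : ℤ → K} {t : K}
    (h : ∀ p m : ℤ,
      ((p : K) - m) * d (p + m) = ((p : K) - m - t) * d m + ((p : K) - m + t) * d p) :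
    ∃ c : K, ∀ m : ℤ, d m = c * (t - m) := by
  have h0 : ∀ p : ℤ, t * d p = (t - p) * d 0 := fun p => by
    have := h p 0
    simp only [add_zero, Int.cast_zero, sub_zero] at this
    linear_combination -this
  rcases eq_or_ne t 0 with rfl | ht
  · have hd0 : d 0 = 0 := by simpa using (h0 1).symm
    have hneg : d (-1) = -d 1 := by
      have := h 1 (-1)
      rw [add_neg_cancel, hd0] at this
      push_cast at this
      linear_combination -this / 2
    -- for `t = 0` the relation says that `d` is additive on distinct arguments
    have hstep : ∀ n : ℤ, d (n + 1) = d n + d 1 := fun n => by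
      rcases eq_or_ne n 1 with rfl | hn
      · have := h 2 (-1)
        rw [show (2 : ℤ) + -1 = 1 by norm_num, hneg] at this
        rw [show (1 : ℤ) + 1 = 2 by norm_num]
        push_cast at this
        linear_combination -this / 3
      · have := h n 1
        have hn' : (n : K) - 1 ≠ 0 := sub_ne_zero.mpr (by exact_mod_cast hn)
        refine mul_left_cancel₀ hn' ?_
        simp only [sub_zero, add_zero] at this
        linear_combination this
    refine ⟨-d 1, fun m => ?_⟩
    induction m using Int.induction_on with
    | zero => simp [hd0]
    | succ n ih => rw [hstep, ih]; push_cast; ring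
    | pred n ih =>
      have := hstep (-n - 1)
      rw [sub_add_cancel, ih] at this
      push_cast at this ⊢
      linear_combination -this
  · exact ⟨d 0 / t, fun m => by field_simp; linear_combination h0 m⟩

theorem witt_symm_biderivation_eq_zero {A : ℤ → ℤ → K} {s : ℤ}
    (hsymm : ∀ m n, A m n = A n m)
    (h : ∀ p m n : ℤ, ((p : K) - m) * A (p + m) n
      = ((p : K) - m - (n + s)) * A m n + ((p : K) - m + (n + s)) * A p n) :
    ∀ m n, A m n = 0 := by
  choose c hc using fun n =>
    exists_eq_mul_sub_of_witt_derivation (d := (A · n)) (t := (n + s : K)) (h · · n)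
  suffices hc0 : ∀ n, c n = 0 by simp [hc, hc0]
  have hflip : ∀ m n : ℤ, c n * (n + s - m) = c m * (m + s - n) := fun m n => by
    rw [← hc, ← hc, hsymm]
  rcases eq_or_ne s 0 with rfl | hs
  · have hanti : ∀ m n : ℤ, m ≠ n → c n = -c m := fun m n hmn => by
      have hmn' : (n : K) - m ≠ 0 := sub_ne_zero.mpr (by exact_mod_cast hmn.symm)
      refine mul_left_cancel₀ hmn' ?_
      linear_combination hflip m n
    have h0 : c 0 = 0 := by
      linear_combination (hanti 1 0 (by norm_num) + hanti 2 0 (by norm_num)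
        - hanti 2 1 (by norm_num)) / 2
    intro n
    rcases eq_or_ne n 0 with rfl | hn
    · exact h0
    · rw [hanti 0 n hn.symm, h0, neg_zero]
  · intro n
    have := hflip (n - s + s) (n - s)
    have hs' : (2 * s : K) ≠ 0 := by exact_mod_cast mul_ne_zero two_ne_zero hs
    push_cast at this
    simp only [sub_add_cancel] at this
    exact (mul_eq_zero.mp (by linear_combination -this)).resolve_right hs'

theorem witt_one_forms_symm_biderivation_eq_mul {a : ℤ → ℤ → K} {s : ℤ}
    (hsymm : ∀ m n, a m n = a n m)
    (h : ∀ p m n : ℤ, ((p : K) - m) * a (p + m) n = (p + m + n + s : K) * (a p n - a m n)) :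
    ∀ m n, a m n = (m + n + s : K) * (a 1 0 - a 0 0) := by
  have hE : ∀ p n : ℤ, (n + s : K) * a p n = (p + n + s : K) * a 0 n := fun p n => by
    have := h p 0 n
    simp only [add_zero, Int.cast_zero, sub_zero] at this
    linear_combination -this
  have hν : ∀ n : ℤ, a 0 n = (n + s : K) * (a 1 0 - a 0 0) := by
    rcases eq_or_ne s 0 with rfl | hs
    · have hR : ∀ p n : ℤ, p + n ≠ 0 → (p : K) * a 0 n = n * a 0 p := fun p n hpn => by
        have hpn' : (p + n : K) ≠ 0 := by exact_mod_cast hpn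
        refine mul_left_cancel₀ hpn' ?_
        have h1 := hE p n
        have h2 := hE n p
        rw [hsymm n p] at h2
        push_cast at h1 h2
        linear_combination (-(p : K)) * h1 + n * h2
      have h00 : a 0 0 = 0 := by simpa using (hE 1 0).symm
      have hμ : a 1 0 - a 0 0 = a 0 1 := by rw [hsymm 1 0, h00, sub_zero]
      intro n
      rcases eq_or_ne n (-1) with rfl | hn
      · have := hR 2 (-1) (by norm_num)
        have h2 := hR 1 2 (by norm_num)
        push_cast at this h2 ⊢
        linear_combination this / 2 - h2 / 2 + hμ
      · have := hR 1 n (by omega)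
        push_cast at this ⊢
        linear_combination this - n * hμ
    · have hs' : (s : K) ≠ 0 := by exact_mod_cast hs
      have h0 : ∀ n : ℤ, (s : K) * a 0 n = (n + s : K) * a 0 0 := fun n => by
        simpa [hsymm n 0] using hE n 0
      intro n
      refine mul_left_cancel₀ hs' ?_
      have h1 := h0 1
      rw [← hsymm 1 0] at h1
      push_cast at h1
      linear_combination h0 n - (n + s : K) * h1
  have hoff : ∀ m n : ℤ, n + s ≠ 0 → a m n = (m + n + s : K) * (a 1 0 - a 0 0) := by
    intro m n hn
    have hn' : (n + s : K) ≠ 0 := by exact_mod_cast hn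
    refine mul_left_cancel₀ hn' ?_
    linear_combination hE m n + (m + n + s : K) * hν n
  have hoff' : ∀ m n : ℤ, m + s ≠ 0 ∨ n + s ≠ 0 →
      a m n = (m + n + s : K) * (a 1 0 - a 0 0) := by
    rintro m n (hm | hn)
    · rw [hsymm, hoff n m hm]; ring
    · exact hoff m n hn
  intro m n
  by_cases hmn : m + s ≠ 0 ∨ n + s ≠ 0
  · exact hoff' m n hmn
  obtain ⟨rfl, rfl⟩ : m = -s ∧ n = -s := by omega
  rcases eq_or_ne s 0 with rfl | hs
  · simpa using hν 0
  have h3 : (3 * s : K) ≠ 0 := by exact_mod_cast mul_ne_zero three_ne_zero hs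
  have e := h s (-2 * s) (-s)
  rw [show s + -2 * s = -s by ring, hoff' s (-s) (.inl (by omega)),
    hoff' (-2 * s) (-s) (.inl (by omega))] at e
  refine mul_left_cancel₀ h3 ?_
  push_cast at e ⊢
  linear_combination e

end Recurrences

theorem Module.Basis.repr_apply_map_eq_mul {ι R M : Type*} [CommSemiring R] [AddCommMonoid M]
    [Module R M] (B : Module.Basis ι R M) (g : M →ₗ[R] M) {i j : ι} {c : R}
    (h : ∀ l, B.repr (g (B l)) i = c * B.repr (B l) j) (x : M) :
    B.repr (g x) i = c * B.repr x j := by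
  have := B.ext (f₁ := Finsupp.lapply i ∘ₗ B.repr.toLinearMap ∘ₗ g)
    (f₂ := c • (Finsupp.lapply j ∘ₗ B.repr.toLinearMap)) (by simpa using h)
  simpa using LinearMap.congr_fun this x

namespace IsWab

variable {W : Type*} [LieRing W] [LieAlgebra ℂ W] {L I : ℤ → W}

section

variable {a b : ℂ}

noncomputable def stdBasis (hW : IsWab a b W L I) : Module.Basis (ℤ ⊕ ℤ) ℂ W :=
  hW.basis.choose

theorem stdBasis_inl (hW : IsWab a b W L I) (m : ℤ) : hW.stdBasis (.inl m) = L m :=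
  hW.basis.choose_spec.1 m

theorem stdBasis_inr (hW : IsWab a b W L I) (m : ℤ) : hW.stdBasis (.inr m) = I m :=
  hW.basis.choose_spec.2 m

theorem repr_L (hW : IsWab a b W L I) (m : ℤ) :
    hW.stdBasis.repr (L m) = Finsupp.single (.inl m) 1 := by
  rw [← hW.stdBasis_inl, Module.Basis.repr_self]

theorem repr_I (hW : IsWab a b W L I) (m : ℤ) :
    hW.stdBasis.repr (I m) = Finsupp.single (.inr m) 1 := by
  rw [← hW.stdBasis_inr, Module.Basis.repr_self]

theorem eq_zero_of_smul_I_eq_smul_I (hW : IsWab a b W L I) {c d : ℂ} {j k : ℤ} (hjk : j ≠ k)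
    (h : c • I j = d • I k) : d = 0 := by
  simpa [hW.repr_I, Finsupp.single_apply, hjk]
    using (congrArg (hW.stdBasis.repr · (.inr k)) h).symm

theorem repr_lie_L_inl (hW : IsWab a b W L I) (p k : ℤ) (x : W) :
    hW.stdBasis.repr ⁅L p, x⁆ (.inl k)
      = (2 * p - k : ℂ) * hW.stdBasis.repr x (.inl (k - p)) := by
  refine hW.stdBasis.repr_apply_map_eq_mul (LieAlgebra.ad ℂ W (L p)) (fun l => ?_) x
  rcases l with q | q
  · simp only [LieAlgebra.ad_apply, stdBasis_inl, hW.bracket_LL, map_smul, repr_L,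
      Finsupp.smul_apply, Finsupp.single_apply, Sum.inl.injEq, smul_eq_mul]
    split_ifs with h1 h2 h2 <;> first | omega | simp
    subst h1; push_cast; ring
  · simp [stdBasis_inr, hW.bracket_LI, repr_I]

theorem repr_lie_L_inr (hW : IsWab a b W L I) (p k : ℤ) (x : W) :
    hW.stdBasis.repr ⁅L p, x⁆ (.inr k)
      = -((k - p : ℂ) + a + b * p) * hW.stdBasis.repr x (.inr (k - p)) := by
  refine hW.stdBasis.repr_apply_map_eq_mul (LieAlgebra.ad ℂ W (L p)) (fun l => ?_) x
  rcases l with q | q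
  · simp [stdBasis_inl, hW.bracket_LL, repr_L]
  · simp only [LieAlgebra.ad_apply, stdBasis_inr, hW.bracket_LI, map_smul, repr_I,
      Finsupp.smul_apply, Finsupp.single_apply, Sum.inr.injEq, smul_eq_mul]
    split_ifs with h1 h2 h2 <;> first | omega | simp
    subst h1; push_cast; ring

theorem lie_I_eq_zero_of_repr_inl_eq_zero (hW : IsWab a b W L I) {y : W}
    (hy : ∀ k, hW.stdBasis.repr y (.inl k) = 0) (m : ℤ) : ⁅y, I m⁆ = 0 := by
  rw [← hW.stdBasis.linearCombination_repr y, Finsupp.linearCombination_apply, Finsupp.sum,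
    sum_lie]
  refine Finset.sum_eq_zero fun i _ => ?_
  rcases i with k | k
  · rw [hy, zero_smul, zero_lie]
  · rw [stdBasis_inr, smul_lie, hW.bracket_II, smul_zero]

end

theorem eq_smul_L_add_smul_I_of_lie_L_zero {b : ℂ} (hW : IsWab 0 b W L I) {m : ℤ} {x : W}
    (hx : ⁅L 0, x⁆ = -(m : ℂ) • x) :
    x = hW.stdBasis.repr x (.inl m) • L m + hW.stdBasis.repr x (.inr m) • I m := by
  apply hW.stdBasis.repr.injective
  ext (k | k) <;> rcases eq_or_ne k m with rfl | hkm
  · simp [repr_L, repr_I]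
  · simpa [repr_lie_L_inl, repr_L, repr_I, hkm, hkm.symm]
      using congrArg (hW.stdBasis.repr · (.inl k)) hx
  · simp [repr_L, repr_I]
  · simpa [repr_lie_L_inr, repr_L, repr_I, hkm, hkm.symm]
      using congrArg (hW.stdBasis.repr · (.inr k)) hx

theorem exists_apply_I_eq_smul_of_map_lie (hW : IsWab 0 1 W L I) (φ : W →ₗ[ℂ] W)
    (hφ : ∀ p m, φ ⁅L p, I m⁆ = ⁅L p, φ (I m)⁆) :
    ∃ c : ℂ, ∀ m, φ (I m) = c • I m := by
  set α : ℤ → ℂ := fun m => hW.stdBasis.repr (φ (I m)) (.inl m)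
  set β : ℤ → ℂ := fun m => hW.stdBasis.repr (φ (I m)) (.inr m)
  have hdeg : ∀ m, φ (I m) = α m • L m + β m • I m := fun m => by
    refine hW.eq_smul_L_add_smul_I_of_lie_L_zero ?_
    rw [← hφ, hW.bracket_LI, map_smul, zero_add]
    simp
  have hrel : ∀ p m : ℤ, -(p + m : ℂ) * α (p + m) = (p - m) * α m ∧
      -(p + m : ℂ) * β (p + m) = -(p + m) * β m := fun p m => by
    have e := hφ p m
    rw [hW.bracket_LI, map_smul, hdeg, hdeg, lie_add, lie_smul, lie_smul, hW.bracket_LL,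
      hW.bracket_LI] at e
    have eL := congrArg (hW.stdBasis.repr · (.inl (p + m))) e
    have eI := congrArg (hW.stdBasis.repr · (.inr (p + m))) e
    simp only [map_add, map_smul, hW.repr_L, hW.repr_I, Finsupp.add_apply, Finsupp.smul_apply,
      Finsupp.single_eq_same, Finsupp.single_apply, reduceCtorEq, if_false, smul_eq_mul] at eL eI
    push_cast at eL eI
    exact ⟨by linear_combination eL, by linear_combination eI⟩
  have hα : ∀ m, α m = 0 := by
    have hα_ne : ∀ m : ℤ, m ≠ 0 → α m = 0 := fun m hm => by
      have h2m : (2 * m : ℂ) ≠ 0 := by exact_mod_cast mul_ne_zero two_ne_zero hm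
      have := (hrel (-m) m).1
      simp only [neg_add_cancel, Int.cast_neg] at this
      exact (mul_eq_zero.mp (by linear_combination this)).resolve_left h2m
    intro m
    rcases eq_or_ne m 0 with rfl | hm
    · simpa [hα_ne 1 one_ne_zero] using (hrel 1 0).1.symm
    · exact hα_ne m hm
  refine ⟨β 0, fun m => ?_⟩
  rw [hdeg, hα, zero_smul, zero_add]
  rcases eq_or_ne m 0 with rfl | hm
  · rfl
  · have hm' : (m : ℂ) ≠ 0 := by exact_mod_cast hm
    have := (hrel m 0).2
    simp only [add_zero, Int.cast_zero] at this
    rw [mul_left_cancel₀ (neg_ne_zero.mpr hm') this]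

end IsWab

namespace IsBiderivation

variable {a b : ℂ} {W : Type*} [LieRing W] [LieAlgebra ℂ W] {L I : ℤ → W}
  {f : W →ₗ[ℂ] W →ₗ[ℂ] W}

theorem smul_apply_L_add_eq_lie_sub_lie (hf : IsBiderivation (fun x y => f x y))
    (hW : IsWab a b W L I) (p m n : ℤ) :
    ((p - m : ℤ) : ℂ) • f (L (p + m)) (L n)
      = ⁅L p, f (L m) (L n)⁆ - ⁅L m, f (L p) (L n)⁆ := by
  have h := hf.1 (L p) (L m) (L n)
  beta_reduce at h
  rwa [hW.bracket_LL, map_smul, LinearMap.smul_apply, ← lie_skew (f (L p) (L n)),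
    ← sub_eq_add_neg] at h

theorem repr_apply_L_L_inl_eq_zero (hf : IsBiderivation (fun x y => f x y))
    (hsymm : ∀ x y : W, f x y = f y x) (hW : IsWab a b W L I) (m n k : ℤ) :
    hW.stdBasis.repr (f (L m) (L n)) (.inl k) = 0 := by
  set s := k - m - n
  let A : ℤ → ℤ → ℂ := fun m n => hW.stdBasis.repr (f (L m) (L n)) (.inl (m + n + s))
  have key : ∀ p m n : ℤ, ((p : ℂ) - m) * A (p + m) n
      = ((p : ℂ) - m - (n + s)) * A m n + ((p : ℂ) - m + (n + s)) * A p n := by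
    intro p m n
    have e := congrArg (hW.stdBasis.repr · (.inl (p + m + n + s)))
      (hf.smul_apply_L_add_eq_lie_sub_lie hW p m n)
    simp only [map_sub, map_smul, Finsupp.sub_apply, Finsupp.smul_apply, smul_eq_mul,
      hW.repr_lie_L_inl] at e
    rw [show p + m + n + s - p = m + n + s by ring,
      show p + m + n + s - m = p + n + s by ring] at e
    push_cast [A] at e ⊢
    linear_combination e
  have hA := witt_symm_biderivation_eq_zero (fun m n => by simp only [A, hsymm (L m), add_comm m])
    key m n
  simpa [A, s] using hA

theorem repr_apply_L_L_inr (hf : IsBiderivation (fun x y => f x y))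
    (hsymm : ∀ x y : W, f x y = f y x) (hW : IsWab 0 1 W L I) (m n s : ℤ) :
    hW.stdBasis.repr (f (L m) (L n)) (.inr (m + n + s)) = (m + n + s : ℂ) *
      (hW.stdBasis.repr (f (L 1) (L 0)) (.inr (1 + s))
        - hW.stdBasis.repr (f (L 0) (L 0)) (.inr s)) := by
  let a : ℤ → ℤ → ℂ := fun m n => hW.stdBasis.repr (f (L m) (L n)) (.inr (m + n + s))
  have key : ∀ p m n : ℤ,
      ((p : ℂ) - m) * a (p + m) n = (p + m + n + s : ℂ) * (a p n - a m n) := by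
    intro p m n
    have e := congrArg (hW.stdBasis.repr · (.inr (p + m + n + s)))
      (hf.smul_apply_L_add_eq_lie_sub_lie hW p m n)
    simp only [map_sub, map_smul, Finsupp.sub_apply, Finsupp.smul_apply, smul_eq_mul,
      hW.repr_lie_L_inr] at e
    rw [show p + m + n + s - p = m + n + s by ring,
      show p + m + n + s - m = p + n + s by ring] at e
    push_cast [a] at e ⊢
    linear_combination e
  have ha := witt_one_forms_symm_biderivation_eq_mul
    (fun m n => by simp only [a, hsymm (L m), add_comm m]) key m n
  simpa [a] using ha

theorem apply_L_I_eq_zero (hf : IsBiderivation (fun x y => f x y))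
    (hsymm : ∀ x y : W, f x y = f y x) (hW : IsWab 0 1 W L I) (n m : ℤ) :
    f (L n) (I m) = 0 := by
  choose c hc using fun n => hW.exists_apply_I_eq_smul_of_map_lie (f (L n)) fun p m => by
    have h := hf.2 (L n) (L p) (I m)
    beta_reduce at h
    rw [h, hW.lie_I_eq_zero_of_repr_inl_eq_zero (hf.repr_apply_L_L_inl_eq_zero hsymm hW n p),
      zero_add]
  suffices c n = 0 by rw [hc, this, zero_smul]
  -- `p = 3n + 1` is never `0` or `n`, so on `L p, L n, I (-n)` only `c n` survives at `I (p - n)`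
  have h := hf.1 (L (3 * n + 1)) (L n) (I (-n))
  beta_reduce at h
  have h0 : ⁅L n, I (-n)⁆ = 0 := by simp [hW.bracket_LI]
  rw [hW.bracket_LL, map_smul, LinearMap.smul_apply, hc, hc, hc, lie_smul, smul_lie,
    ← lie_skew (I (-n)), h0, hW.bracket_LI, neg_zero, smul_zero, add_zero, smul_smul,
    smul_smul] at h
  have e := hW.eq_zero_of_smul_I_eq_smul_I (by omega) h
  push_cast at e
  have h2n : (2 * n + 1 : ℂ) ≠ 0 := by exact_mod_cast (by omega : 2 * n + 1 ≠ 0)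
  exact (mul_eq_zero.mp (by linear_combination -e : c n * (2 * n + 1) = 0)).resolve_right h2n

theorem apply_I_I_eq_zero (hf : IsBiderivation (fun x y => f x y))
    (hsymm : ∀ x y : W, f x y = f y x) (hW : IsWab 0 1 W L I) (m n : ℤ) :
    f (I m) (I n) = 0 := by
  choose c hc using fun m => hW.exists_apply_I_eq_smul_of_map_lie (f (I m)) fun p n => by
    have h := hf.2 (I m) (L p) (I n)
    beta_reduce at h
    rw [h, hsymm (I m), hf.apply_L_I_eq_zero hsymm hW, zero_lie, zero_add]
  have h := hc (m + 1) m
  rw [hsymm, hc] at h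
  rw [hc, hW.eq_zero_of_smul_I_eq_smul_I (by omega) h.symm, zero_smul]

theorem exists_finsupp_apply_L_L (hf : IsBiderivation (fun x y => f x y))
    (hsymm : ∀ x y : W, f x y = f y x) (hW : IsWab 0 1 W L I) :
    ∃ Ω : ℤ →₀ ℂ, ∀ m n : ℤ, f (L m) (L n) =
      Ω.sum fun k c => (((m + n + k : ℤ) : ℂ) * c) • I (m + n + k) := by
  let Ω : ℤ →₀ ℂ :=
    (hW.stdBasis.repr (f (L 1) (L 0))).comapDomain (fun s => .inr (1 + s))
        (Sum.inr_injective.comp (add_right_injective 1)).injOn -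
      (hW.stdBasis.repr (f (L 0) (L 0))).comapDomain Sum.inr Sum.inr_injective.injOn
  refine ⟨Ω, fun m n => hW.stdBasis.repr.injective ?_⟩
  ext (j | j)
  · simp [hf.repr_apply_L_L_inl_eq_zero hsymm hW, map_finsuppSum, Finsupp.sum_apply, hW.repr_I]
  · obtain ⟨s, rfl⟩ : ∃ s, j = m + n + s := ⟨j - m - n, by ring⟩
    have hΩ : Ω s = hW.stdBasis.repr (f (L 1) (L 0)) (.inr (1 + s))
        - hW.stdBasis.repr (f (L 0) (L 0)) (.inr s) := rfl
    rw [hf.repr_apply_L_L_inr hsymm hW, ← hΩ]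
    by_cases h : Ω s = 0 <;>
      simp [map_finsuppSum, Finsupp.sum_apply, hW.repr_I, Finsupp.single_apply, h]

end IsBiderivation

/-- Every symmetric biderivation of `W(0,1)` is of the form `Υ^0_Ω` for a
finitely supported family `Ω`. -/
theorem symmetric_biderivation_W01 {W : Type*} [LieRing W] [LieAlgebra ℂ W]
    (L I : ℤ → W) (hW : IsWab 0 1 W L I) (f : W →ₗ[ℂ] W →ₗ[ℂ] W)
    (hf : IsBiderivation (fun x y => f x y)) (hsymm : ∀ x y : W, f x y = f y x) :
    ∃ Ω : ℤ →₀ ℂ,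
      (∀ m n : ℤ, f (L m) (L n) =
        Ω.sum fun k c => (((m + n + k : ℤ) : ℂ) * c) • I (m + n + k)) ∧
      (∀ m n : ℤ, f (L m) (I n) = 0) ∧
      (∀ m n : ℤ, f (I n) (L m) = 0) ∧
      (∀ m n : ℤ, f (I m) (I n) = 0) := by
  obtain ⟨Ω, hΩ⟩ := hf.exists_finsupp_apply_L_L hsymm hW
  have hLI := hf.apply_L_I_eq_zero hsymm hW
  exact ⟨Ω, hΩ, hLI, fun m n => by rw [hsymm, hLI], hf.apply_I_I_eq_zero hsymm hW⟩
end
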